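/- If A and B are quasidiagonal C*-algebras, then the minimal (spatial) tensor product A ⊗_min B is quasidiagonal. -/

import Mathlib

open Filter Topology

/-- `P` is a finite rank orthogonal projection on the Hilbert space `H`. -/
def IsFinRankProj {H : Type*} [NormedAddCommGroup H] [InnerProductSpace ℂ H]
    (P : H →L[ℂ] H) : Prop :=
  P ∘L P = P ∧ (∀ x y : H, (inner ℂ (P x) y : ℂ) = inner ℂ x (P y)) ∧
    FiniteDimensional ℂ (LinearMap.range P.toLinearMap)

/-- `S ⊆ B(H)` is a quasidiagonal set of operators. -/
def QDSet {H : Type*} [NormedAddCommGroup H] [InnerProductSpace ℂ H]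
    (S : Set (H →L[ℂ] H)) : Prop :=
  ∀ (ω : Finset (H →L[ℂ] H)), ↑ω ⊆ S → ∀ (χ : Finset H) (ε : ℝ), 0 < ε →
    ∃ P : H →L[ℂ] H, IsFinRankProj P ∧ (∀ T ∈ ω, ‖T ∘L P - P ∘L T‖ ≤ ε) ∧
      ∀ x ∈ χ, ‖P x - x‖ ≤ ε

/-- A representation of `A` on a Hilbert space. -/
structure HilbertRep (A : Type*) [NonUnitalNormedRing A] [StarRing A] [Module ℂ A] where
  space : Type
  [nacg : NormedAddCommGroup space]
  [ipc : InnerProductSpace ℂ space]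
  [cs : CompleteSpace space]
  hom : A →⋆ₙₐ[ℂ] (space →L[ℂ] space)

/-- A `C*`-algebra is quasidiagonal if it has a faithful representation whose image is a
quasidiagonal set of operators. -/
def IsQD (A : Type*) [NonUnitalNormedRing A] [StarRing A] [Module ℂ A] : Prop :=
  ∃ r : HilbertRep A,
    letI := r.nacg; letI := r.ipc; letI := r.cs
    Function.Injective r.hom ∧ QDSet (Set.range r.hom)

open scoped InnerProductSpace

/-!
A set `S` of operators is quasidiagonal iff some net of finite rank projections `P` tends
strongly to `1` with `‖T * P - P * T‖ → 0` for every `T ∈ S`. The operators asymptotically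
commuting with such a net form a norm-closed `*`-subalgebra, so the same net serves the
`C*`-algebra generated by `S`. Given nets `P` for `π(A)` and `Q` for `ρ(B)`, the operators
`P ⊗ Q` are again finite rank projections; they tend strongly to `1` on elementary tensors,
hence everywhere, and `[S ⊗ T, P ⊗ Q] = [S, P] ⊗ TQ + PS ⊗ [T, Q]` tends to zero because
`‖S ⊗ T‖ ≤ ‖S‖ ‖T‖`.
-/

section TendstoZero

variable {ι 𝕜 E F : Type*} [NormedField 𝕜] [SeminormedAddCommGroup E] [NormedSpace 𝕜 E]
  [SeminormedAddCommGroup F] [NormedSpace 𝕜 F]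

def tendstoZeroSubmodule (l : Filter ι) (A : ι → E →ₗ[𝕜] F) : Submodule 𝕜 E where
  carrier := {x | Tendsto (fun i => A i x) l (𝓝 0)}
  add_mem' {x y} hx hy := by simpa using hx.add hy
  zero_mem' := by simpa using tendsto_const_nhds
  smul_mem' c x hx := by simpa using hx.const_smul c

theorem isClosed_tendstoZeroSubmodule {l : Filter ι} {A : ι → E →ₗ[𝕜] F} {C : ℝ}
    (hA : ∀ᶠ i in l, ∀ x, ‖A i x‖ ≤ C * ‖x‖) : IsClosed (tendstoZeroSubmodule l A : Set E) := by
  refine isClosed_of_closure_subset fun x hx => Metric.tendsto_nhds.2 fun ε hε => ?_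
  obtain ⟨y, hy, hxy⟩ := Metric.mem_closure_iff.1 hx (ε / 2 / (|C| + 1)) (by positivity)
  filter_upwards [Metric.tendsto_nhds.1 hy (ε / 2) (half_pos hε), hA] with i hyi hAi
  rw [dist_zero_right] at hyi ⊢
  have hCxy : C * ‖x - y‖ ≤ ε / 2 := by
    rw [dist_eq_norm, lt_div_iff₀ (by positivity)] at hxy
    nlinarith [le_abs_self C, abs_nonneg C, norm_nonneg (x - y)]
  calc ‖A i x‖ = ‖A i y + A i (x - y)‖ := by rw [← map_add, add_sub_cancel]
    _ ≤ ‖A i y‖ + C * ‖x - y‖ := (norm_add_le _ _).trans (add_le_add_right (hAi _) _)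
    _ < ε := by linarith

end TendstoZero

section QDFilter

variable {H : Type*} [NormedAddCommGroup H] [InnerProductSpace ℂ H]

theorem IsFinRankProj.isStarProjection [CompleteSpace H] {P : H →L[ℂ] H}
    (hP : IsFinRankProj P) : IsStarProjection P :=
  ⟨hP.1, ContinuousLinearMap.isSelfAdjoint_iff_isSymmetric.2 hP.2.1⟩

theorem IsFinRankProj.norm_le_one [CompleteSpace H] {P : H →L[ℂ] H} (hP : IsFinRankProj P) :
    ‖P‖ ≤ 1 :=
  hP.isStarProjection.norm_le

structure IsQDFilter (S : Set (H →L[ℂ] H)) (L : Filter (H →L[ℂ] H)) : Prop where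
  neBot : L.NeBot
  eventually_isFinRankProj : ∀ᶠ P in L, IsFinRankProj P
  tendsto_commutator : ∀ T ∈ S, Tendsto (fun P => T * P - P * T) L (𝓝 0)
  tendsto_apply_sub : ∀ x, Tendsto (fun P => P x - x) L (𝓝 0)

theorem IsQDFilter.mono {S S' : Set (H →L[ℂ] H)} {L : Filter (H →L[ℂ] H)}
    (h : IsQDFilter S L) (hS' : S' ⊆ S) : IsQDFilter S' L :=
  { h with tendsto_commutator := fun T hT => h.tendsto_commutator T (hS' hT) }

theorem IsQDFilter.qdSet {S : Set (H →L[ℂ] H)} {L : Filter (H →L[ℂ] H)}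
    (h : IsQDFilter S L) : QDSet S := by
  intro ω hω χ ε hε
  have hcomm : ∀ᶠ P in L, ∀ T ∈ ω, ‖T ∘L P - P ∘L T‖ ≤ ε :=
    (eventually_all_finset ω).2 fun T hT =>
      (h.tendsto_commutator T (hω hT)).norm.eventually (ge_mem_nhds (by simpa using hε))
  have hvec : ∀ᶠ P in L, ∀ x ∈ χ, ‖P x - x‖ ≤ ε :=
    (eventually_all_finset χ).2 fun x _ =>
      (h.tendsto_apply_sub x).norm.eventually (ge_mem_nhds (by simpa using hε))
  have := h.neBot
  exact (h.eventually_isFinRankProj.and (hcomm.and hvec)).exists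

theorem QDSet.exists_isQDFilter {S : Set (H →L[ℂ] H)} (hS : QDSet S) :
    ∃ L, IsQDFilter S L := by
  classical
  let good (ω : Finset (H →L[ℂ] H)) (χ : Finset H) (ε : ℝ) : Set (H →L[ℂ] H) :=
    {P | IsFinRankProj P ∧ (∀ T ∈ ω, ‖T ∘L P - P ∘L T‖ ≤ ε) ∧ ∀ x ∈ χ, ‖P x - x‖ ≤ ε}
  have good_anti {ω ω' χ χ' ε ε'} (hω : ω ⊆ ω') (hχ : χ ⊆ χ') (hε : ε' ≤ ε) :
      good ω' χ' ε' ⊆ good ω χ ε := fun P ⟨hP, hcomm, hvec⟩ =>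
    ⟨hP, fun T hT => (hcomm T (hω hT)).trans hε, fun x hx => (hvec x (hχ hx)).trans hε⟩
  let ι := {c : Finset (H →L[ℂ] H) × Finset H × ℝ // ↑c.1 ⊆ S ∧ 0 < c.2.2}
  let L := ⨅ c : ι, 𝓟 (good c.1.1 c.1.2.1 c.1.2.2)
  have good_mem {ω χ ε} (hω : ↑ω ⊆ S) (hε : 0 < ε) : good ω χ ε ∈ L :=
    mem_iInf_of_mem ⟨(ω, χ, ε), hω, hε⟩ (mem_principal_self _)
  have : Nonempty ι := ⟨⟨(∅, ∅, 1), by simp, one_pos⟩⟩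
  refine ⟨L, ⟨iInf_neBot_of_directed' ?_ ?_, ?_, ?_, ?_⟩⟩
  · rintro ⟨⟨ω, χ, ε⟩, hω, hε⟩ ⟨⟨ω', χ', ε'⟩, hω', hε'⟩
    refine ⟨⟨(ω ∪ ω', χ ∪ χ', min ε ε'), by simpa using ⟨hω, hω'⟩, lt_min hε hε'⟩, ?_, ?_⟩
    · exact principal_mono.2 (good_anti Finset.subset_union_left Finset.subset_union_left
        (min_le_left _ _))
    · exact principal_mono.2 (good_anti Finset.subset_union_right Finset.subset_union_right
        (min_le_right _ _))
  · rintro ⟨⟨ω, χ, ε⟩, hω, hε⟩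
    exact principal_neBot_iff.2 (hS ω hω χ ε hε)
  · filter_upwards [good_mem (ω := ∅) (χ := ∅) (by simp) one_pos] with P hP using hP.1
  · intro T hT
    refine Metric.nhds_basis_closedBall.tendsto_right_iff.2 fun ε hε => ?_
    filter_upwards [good_mem (ω := {T}) (χ := ∅) (by simpa using hT) hε] with P hP
    rw [Metric.mem_closedBall, dist_zero_right]
    exact hP.2.1 T (Finset.mem_singleton_self T)
  · intro x
    refine Metric.nhds_basis_closedBall.tendsto_right_iff.2 fun ε hε => ?_
    filter_upwards [good_mem (ω := ∅) (χ := {x}) (by simp) hε] with P hP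
    simpa using hP.2.2 x (Finset.mem_singleton_self x)

end QDFilter

section Commutant

variable {H : Type*} [NormedAddCommGroup H] [InnerProductSpace ℂ H] [CompleteSpace H]

noncomputable def asymptoticCommutant (L : Filter (H →L[ℂ] H)) (hL : ∀ᶠ P in L, IsSelfAdjoint P) :
    NonUnitalStarSubalgebra ℂ (H →L[ℂ] H) :=
  { tendstoZeroSubmodule L fun P => LinearMap.mulRight ℂ P - LinearMap.mulLeft ℂ P with
    mul_mem' := fun {T T'} hT hT' => by
      have := (hT'.const_mul T).add (hT.mul_const T')
      rw [mul_zero, zero_mul, add_zero] at this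
      refine this.congr fun P => ?_
      simp only [LinearMap.sub_apply, LinearMap.mulRight_apply, LinearMap.mulLeft_apply]
      noncomm_ring
    star_mem' := fun {T} hT => by
      have := hT.star.neg
      rw [star_zero, neg_zero] at this
      refine this.congr' (hL.mono fun P hP => ?_)
      simp only [LinearMap.sub_apply, LinearMap.mulRight_apply, LinearMap.mulLeft_apply,
        star_sub, star_mul, hP.star_eq, neg_sub] }

theorem isClosed_asymptoticCommutant {L : Filter (H →L[ℂ] H)}
    (hL : ∀ᶠ P in L, IsFinRankProj P) :
    IsClosed (asymptoticCommutant L (hL.mono fun _ hP => hP.isStarProjection.isSelfAdjoint) :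
      Set (H →L[ℂ] H)) := by
  refine isClosed_tendstoZeroSubmodule (C := 2) (hL.mono fun P hP T => ?_)
  calc ‖T * P - P * T‖ ≤ ‖T‖ * ‖P‖ + ‖P‖ * ‖T‖ := (norm_sub_le _ _).trans
        (add_le_add (norm_mul_le _ _) (norm_mul_le _ _))
    _ ≤ 2 * ‖T‖ := by nlinarith [hP.norm_le_one, norm_nonneg T]

theorem IsQDFilter.closure_adjoin {S : Set (H →L[ℂ] H)} {L : Filter (H →L[ℂ] H)}
    (h : IsQDFilter S L) :
    IsQDFilter (closure (NonUnitalStarAlgebra.adjoin ℂ S : Set (H →L[ℂ] H))) L :=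
  { h with
    tendsto_commutator := fun T hT => by
      have hL := h.eventually_isFinRankProj
      have hS : NonUnitalStarAlgebra.adjoin ℂ S ≤
          asymptoticCommutant L (hL.mono fun _ hP => hP.isStarProjection.isSelfAdjoint) :=
        NonUnitalStarAlgebra.adjoin_le h.tendsto_commutator
      exact closure_minimal hS (isClosed_asymptoticCommutant hL) hT }

end Commutant

section Tensor

variable {H K HK : Type*}
  [NormedAddCommGroup H] [InnerProductSpace ℂ H]
  [NormedAddCommGroup K] [InnerProductSpace ℂ K]
  [NormedAddCommGroup HK] [InnerProductSpace ℂ HK]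
  {t : H →ₗ[ℂ] K →ₗ[ℂ] HK}

theorem norm_tmul (ht : ∀ x x' y y', ⟪t x y, t x' y'⟫_ℂ = ⟪x, x'⟫_ℂ * ⟪y, y'⟫_ℂ)
    (x : H) (y : K) : ‖t x y‖ = ‖x‖ * ‖y‖ := by
  have h := ht x x y y
  rw [inner_self_eq_norm_sq_to_K, inner_self_eq_norm_sq_to_K, inner_self_eq_norm_sq_to_K] at h
  rw [← sq_eq_sq₀ (norm_nonneg _) (by positivity), mul_pow]
  exact_mod_cast h

theorem norm_sum_tmul_of_orthonormal (ht : ∀ x x' y y', ⟪t x y, t x' y'⟫_ℂ = ⟪x, x'⟫_ℂ * ⟪y, y'⟫_ℂ)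
    {n : ℕ} {e : Fin n → H} (he : Orthonormal ℂ e) (w : Fin n → K) :
    ‖∑ j, t (e j) (w j)‖ = √(∑ j, ‖w j‖ ^ 2) := by
  have h : ⟪∑ j, t (e j) (w j), ∑ j, t (e j) (w j)⟫_ℂ = ∑ j, ⟪w j, w j⟫_ℂ := by
    simp only [inner_sum, sum_inner, ht, orthonormal_iff_ite.1 he, ite_mul, one_mul, zero_mul,
      Finset.sum_ite_eq', Finset.mem_univ, if_true]
  simp only [inner_self_eq_norm_sq_to_K] at h
  rw [← Real.sqrt_sq (norm_nonneg (∑ j, t (e j) (w j)))]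
  exact congrArg Real.sqrt (by exact_mod_cast h)

theorem exists_orthonormal_sum_tmul_eq {z : HK}
    (hz : z ∈ Submodule.span ℂ (Set.range fun p : H × K => t p.1 p.2)) :
    ∃ (n : ℕ) (e : Fin n → H) (w : Fin n → K), Orthonormal ℂ e ∧ z = ∑ j, t (e j) (w j) := by
  obtain ⟨m, c, g, rfl⟩ := Submodule.mem_span_set'.1 hz
  choose p hp using fun i => (g i).2
  let V := Submodule.span ℂ (Set.range fun i => (p i).1)
  have : FiniteDimensional ℂ V := FiniteDimensional.span_of_finite ℂ (Set.finite_range _)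
  let b := stdOrthonormalBasis ℂ V
  have hexpand (i : Fin m) : (p i).1 = ∑ j, ⟪(b j : H), (p i).1⟫_ℂ • (b j : H) := by
    simpa using (congrArg Subtype.val (b.sum_repr' ⟨(p i).1, Submodule.subset_span ⟨i, rfl⟩⟩)).symm
  refine ⟨_, fun j => b j, fun j => ∑ i, c i • ⟪(b j : H), (p i).1⟫_ℂ • (p i).2,
    b.orthonormal.comp_linearIsometry V.subtypeₗᵢ, ?_⟩
  simp only [← hp]
  conv_lhs => enter [2, i]; rw [hexpand i]
  simp only [map_sum, map_smul, LinearMap.sum_apply, LinearMap.smul_apply, Finset.smul_sum]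
  exact Finset.sum_comm

theorem ext_tmul {E : Type*} [NormedAddCommGroup E] [NormedSpace ℂ E]
    (hdense : Dense (Submodule.span ℂ (Set.range fun p : H × K => t p.1 p.2) : Set HK))
    {f g : HK →L[ℂ] E} (h : ∀ x y, f (t x y) = g (t x y)) : f = g :=
  ContinuousLinearMap.ext_on hdense (by rintro _ ⟨⟨x, y⟩, rfl⟩; exact h x y)

theorem eq_of_forall_inner_tmul_eq
    (hdense : Dense (Submodule.span ℂ (Set.range fun p : H × K => t p.1 p.2) : Set HK))
    {a b : HK} (h : ∀ x y, ⟪a, t x y⟫_ℂ = ⟪b, t x y⟫_ℂ) : a = b := by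
  have hab : innerSL ℂ a = innerSL ℂ b := ext_tmul hdense (by simpa using h)
  exact ext_inner_right ℂ fun v => by simpa using congr($hab v)

variable {τ : (H →L[ℂ] H) → (K →L[ℂ] K) → (HK →L[ℂ] HK)}

theorem tau_mul
    (hdense : Dense (Submodule.span ℂ (Set.range fun p : H × K => t p.1 p.2) : Set HK))
    (hτ : ∀ S T x y, τ S T (t x y) = t (S x) (T y)) (S S' : H →L[ℂ] H) (T T' : K →L[ℂ] K) :
    τ S T * τ S' T' = τ (S * S') (T * T') :=
  ext_tmul hdense fun x y => by simp [hτ]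

theorem tau_sub_tau
    (hdense : Dense (Submodule.span ℂ (Set.range fun p : H × K => t p.1 p.2) : Set HK))
    (hτ : ∀ S T x y, τ S T (t x y) = t (S x) (T y)) (S S' : H →L[ℂ] H) (T T' : K →L[ℂ] K) :
    τ S T - τ S' T' = τ (S - S') T + τ S' (T - T') :=
  ext_tmul hdense fun x y => by simp [hτ]

theorem norm_tau_one_le (ht : ∀ x x' y y', ⟪t x y, t x' y'⟫_ℂ = ⟪x, x'⟫_ℂ * ⟪y, y'⟫_ℂ)
    (hdense : Dense (Submodule.span ℂ (Set.range fun p : H × K => t p.1 p.2) : Set HK))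
    (hτ : ∀ S T x y, τ S T (t x y) = t (S x) (T y)) (T : K →L[ℂ] K) : ‖τ 1 T‖ ≤ ‖T‖ := by
  refine (τ 1 T).opNorm_le_bound (norm_nonneg T) fun z =>
    hdense.induction (fun z hz => ?_) (isClosed_le (by fun_prop) (by fun_prop)) z
  obtain ⟨n, e, w, he, rfl⟩ := exists_orthonormal_sum_tmul_eq hz
  simp only [map_sum, hτ, one_apply_eq_self, norm_sum_tmul_of_orthonormal ht he]
  rw [← Real.sqrt_sq (norm_nonneg T), ← Real.sqrt_mul (sq_nonneg _), Finset.mul_sum]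
  refine Real.sqrt_le_sqrt (Finset.sum_le_sum fun j _ => ?_)
  rw [← mul_pow]
  exact pow_le_pow_left₀ (norm_nonneg _) (T.le_opNorm _) 2

theorem norm_tau_le (ht : ∀ x x' y y', ⟪t x y, t x' y'⟫_ℂ = ⟪x, x'⟫_ℂ * ⟪y, y'⟫_ℂ)
    (hdense : Dense (Submodule.span ℂ (Set.range fun p : H × K => t p.1 p.2) : Set HK))
    (hτ : ∀ S T x y, τ S T (t x y) = t (S x) (T y)) (S : H →L[ℂ] H) (T : K →L[ℂ] K) :
    ‖τ S T‖ ≤ ‖S‖ * ‖T‖ := by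
  -- `τ S 1` is `1 ⊗ S` for the flipped tensor product `K ⊗ H`.
  have hS : ‖τ S 1‖ ≤ ‖S‖ := by
    refine norm_tau_one_le (t := t.flip) (τ := fun T S => τ S T)
      (fun y y' x x' => by simp [ht, mul_comm]) ?_ (fun T S y x => hτ S T x y) S
    rwa [← Prod.swap_surjective.range_comp] at hdense
  calc ‖τ S T‖ = ‖τ S 1 * τ 1 T‖ := by rw [tau_mul hdense hτ, mul_one, one_mul]
    _ ≤ ‖τ S 1‖ * ‖τ 1 T‖ := norm_mul_le _ _
    _ ≤ ‖S‖ * ‖T‖ := mul_le_mul hS (norm_tau_one_le ht hdense hτ T) (norm_nonneg _)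
      (norm_nonneg _)

theorem norm_tau_commutator_le (ht : ∀ x x' y y', ⟪t x y, t x' y'⟫_ℂ = ⟪x, x'⟫_ℂ * ⟪y, y'⟫_ℂ)
    (hdense : Dense (Submodule.span ℂ (Set.range fun p : H × K => t p.1 p.2) : Set HK))
    (hτ : ∀ S T x y, τ S T (t x y) = t (S x) (T y)) {P S : H →L[ℂ] H} {Q T : K →L[ℂ] K}
    (hP : ‖P‖ ≤ 1) (hQ : ‖Q‖ ≤ 1) :
    ‖τ S T * τ P Q - τ P Q * τ S T‖ ≤ ‖S * P - P * S‖ * ‖T‖ + ‖S‖ * ‖T * Q - Q * T‖ := by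
  rw [tau_mul hdense hτ, tau_mul hdense hτ, tau_sub_tau hdense hτ]
  refine (norm_add_le _ _).trans (add_le_add ?_ ?_)
  · calc _ ≤ ‖S * P - P * S‖ * ‖T * Q‖ := norm_tau_le ht hdense hτ _ _
      _ ≤ _ := mul_le_mul_of_nonneg_left
        ((norm_mul_le _ _).trans (mul_le_of_le_one_right (norm_nonneg _) hQ)) (norm_nonneg _)
  · calc _ ≤ ‖P * S‖ * ‖T * Q - Q * T‖ := norm_tau_le ht hdense hτ _ _
      _ ≤ _ := mul_le_mul_of_nonneg_right
        ((norm_mul_le _ _).trans (mul_le_of_le_one_left (norm_nonneg _) hP)) (norm_nonneg _)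

end Tensor

section CompleteTensor

variable {H K HK : Type*}
  [NormedAddCommGroup H] [InnerProductSpace ℂ H] [CompleteSpace H]
  [NormedAddCommGroup K] [InnerProductSpace ℂ K] [CompleteSpace K]
  [NormedAddCommGroup HK] [InnerProductSpace ℂ HK] [CompleteSpace HK]
  {t : H →ₗ[ℂ] K →ₗ[ℂ] HK} {τ : (H →L[ℂ] H) → (K →L[ℂ] K) → (HK →L[ℂ] HK)}

theorem star_tau (ht : ∀ x x' y y', ⟪t x y, t x' y'⟫_ℂ = ⟪x, x'⟫_ℂ * ⟪y, y'⟫_ℂ)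
    (hdense : Dense (Submodule.span ℂ (Set.range fun p : H × K => t p.1 p.2) : Set HK))
    (hτ : ∀ S T x y, τ S T (t x y) = t (S x) (T y)) (S : H →L[ℂ] H) (T : K →L[ℂ] K) :
    star (τ S T) = τ (star S) (star T) :=
  ext_tmul hdense fun x y => eq_of_forall_inner_tmul_eq hdense fun x' y' => by
    simp only [ContinuousLinearMap.star_eq_adjoint, ContinuousLinearMap.adjoint_inner_left, hτ, ht]

theorem isFinRankProj_tau (ht : ∀ x x' y y', ⟪t x y, t x' y'⟫_ℂ = ⟪x, x'⟫_ℂ * ⟪y, y'⟫_ℂ)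
    (hdense : Dense (Submodule.span ℂ (Set.range fun p : H × K => t p.1 p.2) : Set HK))
    (hτ : ∀ S T x y, τ S T (t x y) = t (S x) (T y)) {P : H →L[ℂ] H} {Q : K →L[ℂ] K}
    (hP : IsFinRankProj P) (hQ : IsFinRankProj Q) : IsFinRankProj (τ P Q) := by
  refine ⟨?_, ?_, ?_⟩
  · exact (tau_mul hdense hτ P P Q Q).trans (congrArg₂ τ hP.1 hQ.1)
  · refine ContinuousLinearMap.isSelfAdjoint_iff_isSymmetric.1 ?_
    rw [IsSelfAdjoint, star_tau ht hdense hτ, hP.isStarProjection.isSelfAdjoint.star_eq,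
      hQ.isStarProjection.isSelfAdjoint.star_eq]
  · let V := Submodule.map₂ t (LinearMap.range P.toLinearMap) (LinearMap.range Q.toLinearMap)
    have : FiniteDimensional ℂ V := Module.Finite.iff_fg.2 <|
      (Module.Finite.iff_fg.1 hP.2.2).map₂ t (Module.Finite.iff_fg.1 hQ.2.2)
    refine Submodule.finiteDimensional_of_le (S₂ := V) ?_
    rintro _ ⟨z, rfl⟩
    refine hdense.induction (fun z hz => ?_)
      (V.closed_of_finiteDimensional.preimage (τ P Q).continuous) z
    refine Submodule.span_le (p := V.comap (τ P Q).toLinearMap) |>.2 ?_ hz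
    rintro _ ⟨⟨x, y⟩, rfl⟩
    show τ P Q (t x y) ∈ V
    rw [hτ]
    exact Submodule.apply_mem_map₂ t ⟨x, rfl⟩ ⟨y, rfl⟩

theorem IsQDFilter.tensor (ht : ∀ x x' y y', ⟪t x y, t x' y'⟫_ℂ = ⟪x, x'⟫_ℂ * ⟪y, y'⟫_ℂ)
    (hdense : Dense (Submodule.span ℂ (Set.range fun p : H × K => t p.1 p.2) : Set HK))
    (hτ : ∀ S T x y, τ S T (t x y) = t (S x) (T y)) {S₁ : Set (H →L[ℂ] H)}
    {L₁ : Filter (H →L[ℂ] H)} {S₂ : Set (K →L[ℂ] K)} {L₂ : Filter (K →L[ℂ] K)}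
    (h₁ : IsQDFilter S₁ L₁) (h₂ : IsQDFilter S₂ L₂) :
    IsQDFilter (Set.image2 τ S₁ S₂) (map (fun PQ => τ PQ.1 PQ.2) (L₁ ×ˢ L₂)) := by
  have := h₁.neBot
  have := h₂.neBot
  have hproj : ∀ᶠ PQ in L₁ ×ˢ L₂, IsFinRankProj PQ.1 ∧ IsFinRankProj PQ.2 :=
    h₁.eventually_isFinRankProj.prod_mk h₂.eventually_isFinRankProj
  have hW : ∀ᶠ W in map (fun PQ => τ PQ.1 PQ.2) (L₁ ×ˢ L₂), IsFinRankProj W :=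
    eventually_map.2 (hproj.mono fun PQ h => isFinRankProj_tau ht hdense hτ h.1 h.2)
  refine ⟨inferInstance, hW, ?_, fun z => ?_⟩
  · rintro _ ⟨S, hS, T, hT, rfl⟩
    refine tendsto_map'_iff.2 (squeeze_zero_norm' (hproj.mono fun PQ h =>
      norm_tau_commutator_le ht hdense hτ h.1.norm_le_one h.2.norm_le_one) ?_)
    simpa using (((h₁.tendsto_commutator S hS).comp tendsto_fst).norm.mul_const ‖T‖).add
      (((h₂.tendsto_commutator T hT).comp tendsto_snd).norm.const_mul ‖S‖)
  · let N := tendstoZeroSubmodule (map (fun PQ => τ PQ.1 PQ.2) (L₁ ×ˢ L₂))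
      fun W : HK →L[ℂ] HK => W.toLinearMap - LinearMap.id
    have hclosed : IsClosed (N : Set HK) := isClosed_tendstoZeroSubmodule (C := 2)
      (hW.mono fun W hW z => by
        calc ‖W z - z‖ ≤ ‖W‖ * ‖z‖ + ‖z‖ :=
              (norm_sub_le _ _).trans (add_le_add_left (W.le_opNorm z) _)
          _ ≤ 2 * ‖z‖ := by nlinarith [hW.norm_le_one, norm_nonneg z])
    show z ∈ N
    refine hdense.induction (fun z hz => Submodule.span_le.2 ?_ hz) hclosed z
    rintro _ ⟨⟨x, y⟩, rfl⟩
    let tc := t.mkContinuous₂ 1 fun x y => by rw [norm_tmul ht, one_mul]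
    have hx : Tendsto (fun PQ => PQ.1 x) (L₁ ×ˢ L₂) (𝓝 x) :=
      tendsto_sub_nhds_zero_iff.1 ((h₁.tendsto_apply_sub x).comp tendsto_fst)
    have hy : Tendsto (fun PQ => PQ.2 y) (L₁ ×ˢ L₂) (𝓝 y) :=
      tendsto_sub_nhds_zero_iff.1 ((h₂.tendsto_apply_sub y).comp tendsto_snd)
    have := tendsto_sub_nhds_zero_iff.2 ((tc.continuous₂.tendsto (x, y)).comp (hx.prodMk_nhds hy))
    exact tendsto_map'_iff.2 (by simpa [Function.comp_def, hτ, tc] using this)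

end CompleteTensor

/-- `HK` is the Hilbert space tensor product `H ⊗ K` through `t`, and `τ S T` is `S ⊗ T`. -/
theorem qdSet_minimal_tensor_product_general {A B : Type*}
    [NonUnitalCStarAlgebra A] [NonUnitalCStarAlgebra B]
    {H K HK : Type*}
    [NormedAddCommGroup H] [InnerProductSpace ℂ H] [CompleteSpace H]
    [NormedAddCommGroup K] [InnerProductSpace ℂ K] [CompleteSpace K]
    [NormedAddCommGroup HK] [InnerProductSpace ℂ HK] [CompleteSpace HK]
    (t : H →ₗ[ℂ] K →ₗ[ℂ] HK)
    (ht : ∀ (x x' : H) (y y' : K),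
      (inner ℂ (t x y) (t x' y') : ℂ) = (inner ℂ x x' : ℂ) * (inner ℂ y y' : ℂ))
    (hdense : Dense (Submodule.span ℂ (Set.range fun p : H × K => t p.1 p.2) : Set HK))
    (τ : (H →L[ℂ] H) → (K →L[ℂ] K) → (HK →L[ℂ] HK))
    (hτ : ∀ (S : H →L[ℂ] H) (T : K →L[ℂ] K) (x : H) (y : K), τ S T (t x y) = t (S x) (T y))
    (π : A →⋆ₙₐ[ℂ] (H →L[ℂ] H)) (ρ : B →⋆ₙₐ[ℂ] (K →L[ℂ] K))
    (hπQD : QDSet (Set.range π)) (hρQD : QDSet (Set.range ρ)) :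
    QDSet (closure
      ((NonUnitalStarAlgebra.adjoin ℂ
        {W : HK →L[ℂ] HK | ∃ (a : A) (b : B), W = τ (π a) (ρ b)} : 
          NonUnitalStarSubalgebra ℂ (HK →L[ℂ] HK)) : Set (HK →L[ℂ] HK))) := by
  obtain ⟨L₁, h₁⟩ := hπQD.exists_isQDFilter
  obtain ⟨L₂, h₂⟩ := hρQD.exists_isQDFilter
  refine ((h₁.tensor ht hdense hτ h₂).mono ?_).closure_adjoin.qdSet
  rintro _ ⟨a, b, rfl⟩
  exact Set.mem_image2_of_mem ⟨a, rfl⟩ ⟨b, rfl⟩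

/-- If `A` and `B` are quasidiagonal `C*`-algebras, witnessed by faithful representations
`π`, `ρ` with quasidiagonal images, then the minimal tensor product — the `C*`-algebra
generated in `B(H ⊗ K)` by the operators `π(a) ⊗ ρ(b)` — is a quasidiagonal set of
operators (hence `A ⊗_min B` is quasidiagonal).  Here the Hilbert space tensor product
`HK = H ⊗ K` is given by data: a bilinear map `t` with `⟪t x y, t x' y'⟫ = ⟪x,x'⟫⟪y,y'⟫`
and dense span, and `τ S T` is the operator with `(τ S T)(t x y) = t (S x) (T y)`. -/
theorem qdSet_minimal_tensor_product {A B : Type*}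
    [NonUnitalCStarAlgebra A] [NonUnitalCStarAlgebra B]
    {H K HK : Type*}
    [NormedAddCommGroup H] [InnerProductSpace ℂ H] [CompleteSpace H]
    [NormedAddCommGroup K] [InnerProductSpace ℂ K] [CompleteSpace K]
    [NormedAddCommGroup HK] [InnerProductSpace ℂ HK] [CompleteSpace HK]
    (t : H →ₗ[ℂ] K →ₗ[ℂ] HK)
    (ht : ∀ (x x' : H) (y y' : K),
      (inner ℂ (t x y) (t x' y') : ℂ) = (inner ℂ x x' : ℂ) * (inner ℂ y y' : ℂ))
    (hdense : Dense (Submodule.span ℂ (Set.range fun p : H × K => t p.1 p.2) : Set HK))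
    (τ : (H →L[ℂ] H) → (K →L[ℂ] K) → (HK →L[ℂ] HK))
    (hτ : ∀ (S : H →L[ℂ] H) (T : K →L[ℂ] K) (x : H) (y : K), τ S T (t x y) = t (S x) (T y))
    (π : A →⋆ₙₐ[ℂ] (H →L[ℂ] H)) (ρ : B →⋆ₙₐ[ℂ] (K →L[ℂ] K))
    (hπ : Function.Injective π) (hρ : Function.Injective ρ)
    (hπQD : QDSet (Set.range π)) (hρQD : QDSet (Set.range ρ)) :
    QDSet (closure
      ((NonUnitalStarAlgebra.adjoin ℂ
        {W : HK →L[ℂ] HK | ∃ (a : A) (b : B), W = τ (π a) (ρ b)} : 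
          NonUnitalStarSubalgebra ℂ (HK →L[ℂ] HK)) : Set (HK →L[ℂ] HK))) :=
  qdSet_minimal_tensor_product_general t ht hdense τ hτ π ρ hπQD hρQD
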